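/- Let Q be an IPSTN problem defined by a phylogeny ⟨V,E,I,S,f⟩ with root R and a function v ↦ (τ_min(v), τ_max(v)). If a set X of 2-element subsets of V↑ is a solution to Q, then X is admissible and there exists a real-valued function τ on V ∪ V_X such that (a) for every v ∈ V, τ_min(v) < τ(v) < τ_max(v); (b) for every v ∈ V \ {R}, τ(par(v)) < τ(v); (c) for every element v↑ of V_X, τ(par(v)) < τ(v↑) < τ(v); and (d) for every element {u↑, v↑} of X, τ(u↑) = τ(v↑). -/

import Mathlib

namespace Phylo

variable {α : Type*} {ι : Type*} {σ : Type*}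

/-- `y` is reachable from `x` by a directed path along edges in `E`,
all of whose vertices belong to `W`. -/
def ReachableIn (E : Set (α × α)) (W : Set α) (x y : α) : Prop :=
  ∃ (n : ℕ) (p : ℕ → α), p 0 = x ∧ p n = y ∧ (∀ j ≤ n, p j ∈ W) ∧
    ∀ j < n, (p j, p (j + 1)) ∈ E

/-- `⟨V,E⟩` is a finite rooted tree with root `R`: a finite digraph with a vertex `R`
of in-degree 0 such that every vertex different from `R` has in-degree 1 and is
reachable from `R`. -/
structure IsRootedTree (V : Set α) (E : Set (α × α)) (R : α) : Prop where
  finite : V.Finite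
  edge_fst_mem : ∀ e ∈ E, e.1 ∈ V
  edge_snd_mem : ∀ e ∈ E, e.2 ∈ V
  edge_ne : ∀ e ∈ E, e.1 ≠ e.2
  root_mem : R ∈ V
  root_no_parent : ∀ u, (u, R) ∉ E
  parent_unique : ∀ v ∈ V, v ≠ R → ∃! u, (u, v) ∈ E
  root_reaches : ∀ v ∈ V, ReachableIn E V R v

/-- The digraph with edge set `F` has a subgraph with vertex set `W` that is
a rooted tree. -/
def HasRootedSubtree (F : Set (α × α)) (W : Set α) : Prop :=
  ∃ F' ⊆ F, (∀ e ∈ F', e.1 ∈ W ∧ e.2 ∈ W) ∧ ∃ r, IsRootedTree W F' r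

/-- `v` is a leaf of `⟨V,E⟩`: a vertex of out-degree 0. -/
def IsLeaf (V : Set α) (E : Set (α × α)) (v : α) : Prop :=
  v ∈ V ∧ ∀ u, (v, u) ∉ E

/-! Networks built from a set `X` of 2-element subsets of `V↑`.
A symbol `v↑` is represented by `Sum.inr v : α ⊕ α`, while a vertex `v` of the
tree is represented by `Sum.inl v`.  An unordered pair `{u↑, v↑}` is represented
by `s(u, v) : Sym2 α`. -/

/-- `V_X`: the union of the elements of `X`. -/
def VXset (X : Set (Sym2 α)) : Set α := {v | ∃ e ∈ X, v ∈ e}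

/-- Lateral edges of the network determined by `X`: the edges `⟨u↑, v↑⟩` and
`⟨v↑, u↑⟩` for `{u↑, v↑} ∈ X`. -/
def IsLateralEdgeX (X : Set (Sym2 α)) (e : (α ⊕ α) × (α ⊕ α)) : Prop :=
  ∃ u v, s(u, v) ∈ X ∧ e = (Sum.inr u, Sum.inr v)

/-- `E_X`: obtained from `E` by replacing, for each `v↑ ∈ V_X`, the edge
`⟨par v, v⟩` with `⟨par v, v↑⟩` and `⟨v↑, v⟩`, and adding, for each
`{u↑, v↑} ∈ X`, the lateral edges `⟨u↑, v↑⟩` and `⟨v↑, u↑⟩`. -/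
def EXset (E : Set (α × α)) (par : α → α) (X : Set (Sym2 α)) :
    Set ((α ⊕ α) × (α ⊕ α)) :=
  {e | (∃ u v, (u, v) ∈ E ∧ v ∉ VXset X ∧ e = (Sum.inl u, Sum.inl v)) ∨
       (∃ v ∈ VXset X, e = (Sum.inl (par v), Sum.inr v)) ∨
       (∃ v ∈ VXset X, e = (Sum.inr v, Sum.inl v)) ∨
       IsLateralEdgeX X e}

/-- The vertex set `V ∪ V_X` of the network determined by `X`. -/
def netVertsX (V : Set α) (X : Set (Sym2 α)) : Set (α ⊕ α) :=
  Sum.inl '' V ∪ Sum.inr '' VXset X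

/-- `X` is admissible: there is a function `g : (V ∪ V_X) × I → S` agreeing with
`f` on leaves such that every nonempty set `V_is = {x : g(x,i) = s}` carries a
rooted subtree of the network `⟨V ∪ V_X, E_X⟩`. -/
def Admissible (V : Set α) (E : Set (α × α)) (par : α → α)
    (f : α → ι → σ) (X : Set (Sym2 α)) : Prop :=
  ∃ g : α ⊕ α → ι → σ,
    (∀ v, IsLeaf V E v → ∀ i, g (Sum.inl v) i = f v i) ∧
    ∀ i s, ({x ∈ netVertsX V X | g x i = s}).Nonempty →
      HasRootedSubtree (EXset E par X) {x ∈ netVertsX V X | g x i = s}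

/-! Events, contacts and the networks they determine.  An event `v↑t` is
represented by the pair `(v, t) : α × ℝ`; in a network it appears as
`Sum.inr (v, t) : α ⊕ (α × ℝ)`. -/

/-- `(v, t)` is an event of the temporal phylogeny with time function `τ`:
`v ∈ V \ {R}` and `τ(par v) < t ≤ τ(v)`. -/
def IsEvent (V : Set α) (R : α) (par : α → α) (τ : α → ℝ) (p : α × ℝ) : Prop :=
  p.1 ∈ V ∧ p.1 ≠ R ∧ τ (par p.1) < p.2 ∧ p.2 ≤ τ p.1

/-- A contact: a set of two different concurrent events. -/
def IsContact (V : Set α) (R : α) (par : α → α) (τ : α → ℝ)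
    (c : Sym2 (α × ℝ)) : Prop :=
  ¬ c.IsDiag ∧ (∀ p ∈ c, IsEvent V R par τ p) ∧ ∀ p ∈ c, ∀ q ∈ c, p.2 = q.2

/-- `V_C`: the union of the contacts in `C`. -/
def VCset (C : Set (Sym2 (α × ℝ))) : Set (α × ℝ) := {p | ∃ c ∈ C, p ∈ c}

/-- `C` is a simple set of contacts for the temporal phylogeny with time
function `τ`: a finite set of contacts such that `t < τ(v)` for every event
`v↑t` in `V_C`, and for every vertex `v` there is at most one `t` with
`v↑t ∈ V_C`. -/
def SimpleContacts (V : Set α) (R : α) (par : α → α) (τ : α → ℝ)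
    (C : Set (Sym2 (α × ℝ))) : Prop :=
  C.Finite ∧ (∀ c ∈ C, IsContact V R par τ c) ∧
    (∀ p ∈ VCset C, p.2 < τ p.1) ∧
    ∀ v t t', (v, t) ∈ VCset C → (v, t') ∈ VCset C → t = t'

/-- Lateral edges of the network determined by `C`. -/
def IsLateralEdgeC (C : Set (Sym2 (α × ℝ)))
    (e : (α ⊕ (α × ℝ)) × (α ⊕ (α × ℝ))) : Prop :=
  ∃ p q, s(p, q) ∈ C ∧ e = (Sum.inr p, Sum.inr q)

/-- `E_C`: obtained from `E` by replacing, for each event `v↑t ∈ V_C`, the edge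
`⟨par v, v⟩` with `⟨par v, v↑t⟩` and `⟨v↑t, v⟩`, and adding, for each contact
`{u↑t, v↑t} ∈ C`, the lateral edges `⟨u↑t, v↑t⟩` and `⟨v↑t, u↑t⟩`. -/
def ECset (E : Set (α × α)) (par : α → α) (C : Set (Sym2 (α × ℝ))) :
    Set ((α ⊕ (α × ℝ)) × (α ⊕ (α × ℝ))) :=
  {e | (∃ u v, (u, v) ∈ E ∧ (∀ t, (v, t) ∉ VCset C) ∧ e = (Sum.inl u, Sum.inl v)) ∨
       (∃ p ∈ VCset C, e = (Sum.inl (par p.1), Sum.inr p)) ∨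
       (∃ p ∈ VCset C, e = (Sum.inr p, Sum.inl p.1)) ∨
       IsLateralEdgeC C e}

/-- The vertex set `V ∪ V_C` of the network determined by `C`. -/
def netVertsC (V : Set α) (C : Set (Sym2 (α × ℝ))) : Set (α ⊕ (α × ℝ)) :=
  Sum.inl '' V ∪ Sum.inr '' VCset C

/-- `C` is perfect: there is `g : (V ∪ V_C) × I → S` agreeing with `f` on the
leaves such that every nonempty set `V_is = {x : g(x,i) = s}` carries a rooted
subtree of the network `⟨V ∪ V_C, E_C⟩`. -/
def PerfectContacts (V : Set α) (E : Set (α × α)) (par : α → α)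
    (f : α → ι → σ) (C : Set (Sym2 (α × ℝ))) : Prop :=
  ∃ g : α ⊕ (α × ℝ) → ι → σ,
    (∀ v, IsLeaf V E v → ∀ i, g (Sum.inl v) i = f v i) ∧
    ∀ i s, ({x ∈ netVertsC V C | g x i = s}).Nonempty →
      HasRootedSubtree (ECset E par C) {x ∈ netVertsC V C | g x i = s}

/-- The summary of a set of contacts: each event `v↑t` is replaced by `v↑`. -/
def summary (C : Set (Sym2 (α × ℝ))) : Set (Sym2 α) :=
  Sym2.map Prod.fst '' C

/-- `X` is a solution to the IPSTN problem given by the phylogeny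
`⟨V,E,I,S,f⟩` (with root `R` and parent function `par`) and the intervals
`(τmin v, τmax v)`: `X` is a set of 2-element subsets of `V↑` that is the
summary of a perfect simple set of contacts for a temporal phylogeny
`⟨V,E,I,S,f,τ⟩` with `τmin v < τ v < τmax v` for all `v ∈ V`. -/
def IsSolution (V : Set α) (E : Set (α × α)) (R : α) (par : α → α)
    (f : α → ι → σ) (τmin τmax : α → EReal) (X : Set (Sym2 α)) : Prop :=
  (∀ e ∈ X, ¬ e.IsDiag ∧ ∀ v ∈ e, v ∈ V ∧ v ≠ R) ∧
  ∃ τ : α → ℝ,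
    (∀ e ∈ E, τ e.1 < τ e.2) ∧
    (∀ v ∈ V, τmin v < (τ v : EReal) ∧ (τ v : EReal) < τmax v) ∧
    ∃ C : Set (Sym2 (α × ℝ)),
      SimpleContacts V R par τ C ∧ PerfectContacts V E par f C ∧ X = summary C

/-- Condition (ii) of Proposition 1: a real-valued function `τ` on `V ∪ V_X`
(represented as a function on `α ⊕ α`, with `Sum.inl v` standing for `v` and
`Sum.inr v` for `v↑`) satisfying (a)–(d). -/
def TimeAssignment (V : Set α) (R : α) (par : α → α)
    (τmin τmax : α → EReal) (X : Set (Sym2 α)) (τ : α ⊕ α → ℝ) : Prop :=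
  (∀ v ∈ V, τmin v < (τ (Sum.inl v) : EReal) ∧ (τ (Sum.inl v) : EReal) < τmax v) ∧
  (∀ v ∈ V, v ≠ R → τ (Sum.inl (par v)) < τ (Sum.inl v)) ∧
  (∀ v ∈ VXset X, τ (Sum.inl (par v)) < τ (Sum.inr v) ∧ τ (Sum.inr v) < τ (Sum.inl v)) ∧
  ∀ u v, s(u, v) ∈ X → τ (Sum.inr u) = τ (Sum.inr v)

/-! A solution `X` is the summary of a perfect simple set `C` of contacts. Because `C` is
simple, each `v↑ ∈ V_X` comes from exactly one event `v↑t`, so forgetting times is a bijection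
from the network of `C` onto that of `X` which maps edges to edges. Rooted subtrees survive
such a map, so colouring `v↑` like `v↑t` makes `X` admissible; timing `v↑` at `t` gives (a)–(d). -/

section RootedTree

variable {β : Type*}

lemma ReachableIn.image (φ : α → β) {F : Set (α × α)} {W : Set α} {x y : α}
    (h : ReachableIn F W x y) :
    ReachableIn ((fun e => (φ e.1, φ e.2)) '' F) (φ '' W) (φ x) (φ y) := by
  obtain ⟨n, p, h0, hn, hW, hE⟩ := h
  exact ⟨n, φ ∘ p, by simp [h0], by simp [hn], fun j hj => ⟨p j, hW j hj, rfl⟩,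
    fun j hj => ⟨(p j, p (j + 1)), hE j hj, rfl⟩⟩

lemma IsRootedTree.image {φ : α → β} {W : Set α} {F : Set (α × α)} {r : α}
    (h : IsRootedTree W F r) (hinj : Set.InjOn φ W) :
    IsRootedTree (φ '' W) ((fun e => (φ e.1, φ e.2)) '' F) (φ r) := by
  have snd_eq {a : α × α} (ha : a ∈ F) {v : α} (hv : v ∈ W) (h2 : φ a.2 = φ v) :
      (a.1, v) ∈ F := by
    rwa [← hinj (h.edge_snd_mem a ha) hv h2]
  constructor
  · exact h.finite.image φ
  · rintro _ ⟨a, ha, rfl⟩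
    exact Set.mem_image_of_mem φ (h.edge_fst_mem a ha)
  · rintro _ ⟨a, ha, rfl⟩
    exact Set.mem_image_of_mem φ (h.edge_snd_mem a ha)
  · rintro _ ⟨a, ha, rfl⟩ heq
    exact h.edge_ne a ha (hinj (h.edge_fst_mem a ha) (h.edge_snd_mem a ha) heq)
  · exact Set.mem_image_of_mem φ h.root_mem
  · rintro _ ⟨a, ha, heq⟩
    exact h.root_no_parent a.1 (snd_eq ha h.root_mem (congrArg Prod.snd heq))
  · rintro _ ⟨v, hv, rfl⟩ hne
    obtain ⟨u, hu, huniq⟩ := h.parent_unique v hv (fun hvr => hne (hvr ▸ rfl))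
    refine ⟨φ u, ⟨(u, v), hu, rfl⟩, ?_⟩
    rintro u' ⟨a, ha, heq⟩
    have h1 : φ a.1 = u' := congrArg Prod.fst heq
    rw [← h1, huniq a.1 (snd_eq ha hv (congrArg Prod.snd heq))]
  · rintro _ ⟨v, hv, rfl⟩
    exact (h.root_reaches v hv).image φ

lemma HasRootedSubtree.image {φ : α → β} {F : Set (α × α)} {G : Set (β × β)} {W : Set α}
    (h : HasRootedSubtree F W) (hinj : Set.InjOn φ W)
    (hedge : ∀ e ∈ F, (φ e.1, φ e.2) ∈ G) :
    HasRootedSubtree G (φ '' W) := by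
  obtain ⟨F', hF'F, hF'W, r, hr⟩ := h
  refine ⟨(fun e => (φ e.1, φ e.2)) '' F', ?_, ?_, φ r, hr.image hinj⟩
  · rintro _ ⟨e, he, rfl⟩
    exact hedge e (hF'F he)
  · rintro _ ⟨e, he, rfl⟩
    exact ⟨Set.mem_image_of_mem φ (hF'W e he).1, Set.mem_image_of_mem φ (hF'W e he).2⟩

end RootedTree

section Summary

variable {V : Set α} {E : Set (α × α)} {par : α → α} {C : Set (Sym2 (α × ℝ))}

lemma mem_VXset_summary {v : α} : v ∈ VXset (summary C) ↔ ∃ t, (v, t) ∈ VCset C := by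
  constructor
  · rintro ⟨_, ⟨c, hc, rfl⟩, hv⟩
    obtain ⟨p, hp, rfl⟩ := Sym2.mem_map.1 hv
    exact ⟨p.2, c, hc, hp⟩
  · rintro ⟨t, c, hc, hp⟩
    exact ⟨Sym2.map Prod.fst c, ⟨c, hc, rfl⟩, Sym2.mem_map.2 ⟨(v, t), hp, rfl⟩⟩

lemma lateral_mem_summary {p q : α × ℝ} (h : s(p, q) ∈ C) : s(p.1, q.1) ∈ summary C :=
  ⟨s(p, q), h, Sym2.map_mk _ _ _⟩

lemma map_fst_mem_netVertsX {x : α ⊕ (α × ℝ)} (hx : x ∈ netVertsC V C) :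
    Sum.map id Prod.fst x ∈ netVertsX V (summary C) := by
  rcases hx with ⟨v, hv, rfl⟩ | ⟨p, hp, rfl⟩
  · exact Or.inl ⟨v, hv, rfl⟩
  · exact Or.inr ⟨p.1, mem_VXset_summary.2 ⟨p.2, hp⟩, rfl⟩

lemma map_fst_mem_EXset {e : (α ⊕ (α × ℝ)) × (α ⊕ (α × ℝ))} (he : e ∈ ECset E par C) :
    (Sum.map id Prod.fst e.1, Sum.map id Prod.fst e.2) ∈ EXset E par (summary C) := by
  rcases he with ⟨u, v, huv, hv, rfl⟩ | ⟨p, hp, rfl⟩ | ⟨p, hp, rfl⟩ | ⟨p, q, hpq, rfl⟩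
  · exact Or.inl ⟨u, v, huv, fun h => (mem_VXset_summary.1 h).elim hv, rfl⟩
  · exact Or.inr (Or.inl ⟨p.1, mem_VXset_summary.2 ⟨p.2, hp⟩, rfl⟩)
  · exact Or.inr (Or.inr (Or.inl ⟨p.1, mem_VXset_summary.2 ⟨p.2, hp⟩, rfl⟩))
  · exact Or.inr (Or.inr (Or.inr ⟨p.1, q.1, lateral_mem_summary hpq, rfl⟩))

/-- The time `t` of the event `v↑t` in `C`; junk `sInf ∅ = 0` if there is none. -/
noncomputable def eventTime (C : Set (Sym2 (α × ℝ))) (v : α) : ℝ :=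
  sInf {t | (v, t) ∈ VCset C}

noncomputable def liftVertex (C : Set (Sym2 (α × ℝ))) : α ⊕ α → α ⊕ (α × ℝ) :=
  Sum.map id fun v => (v, eventTime C v)

variable (huniq : ∀ v t t', (v, t) ∈ VCset C → (v, t') ∈ VCset C → t = t')
include huniq

lemma eventTime_eq_of_mem {v : α} {t : ℝ} (h : (v, t) ∈ VCset C) : eventTime C v = t := by
  have : {t' | (v, t') ∈ VCset C} = {t} :=
    Set.eq_singleton_iff_unique_mem.2 ⟨h, fun t' h' => huniq v t' t h' h⟩
  rw [eventTime, this, csInf_singleton]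

lemma mk_eventTime_mem_VCset {v : α} (hv : v ∈ VXset (summary C)) :
    (v, eventTime C v) ∈ VCset C := by
  obtain ⟨t, ht⟩ := mem_VXset_summary.1 hv
  rwa [eventTime_eq_of_mem huniq ht]

lemma liftVertex_map_fst {x : α ⊕ (α × ℝ)} (hx : x ∈ netVertsC V C) :
    liftVertex C (Sum.map id Prod.fst x) = x := by
  rcases hx with ⟨v, -, rfl⟩ | ⟨p, hp, rfl⟩
  · rfl
  · simp only [liftVertex, Sum.map_inr, eventTime_eq_of_mem huniq hp]

lemma liftVertex_mem_netVertsC {x : α ⊕ α} (hx : x ∈ netVertsX V (summary C)) :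
    liftVertex C x ∈ netVertsC V C := by
  rcases hx with ⟨v, hv, rfl⟩ | ⟨v, hv, rfl⟩
  · exact Or.inl ⟨v, hv, rfl⟩
  · exact Or.inr ⟨_, mk_eventTime_mem_VCset huniq hv, rfl⟩

lemma image_map_fst_netVertsC (P : α ⊕ (α × ℝ) → Prop) :
    Sum.map id Prod.fst '' {y ∈ netVertsC V C | P y} =
      {x ∈ netVertsX V (summary C) | P (liftVertex C x)} := by
  ext x
  constructor
  · rintro ⟨y, ⟨hy, hPy⟩, rfl⟩
    exact ⟨map_fst_mem_netVertsX hy, (liftVertex_map_fst huniq hy).symm ▸ hPy⟩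
  · rintro ⟨hx, hPx⟩
    refine ⟨liftVertex C x, ⟨liftVertex_mem_netVertsC huniq hx, hPx⟩, ?_⟩
    rcases x with v | v <;> rfl

theorem PerfectContacts.admissible_summary {ι σ : Type*} {f : α → ι → σ}
    (hC : PerfectContacts V E par f C) : Admissible V E par f (summary C) := by
  obtain ⟨g, hleaf, htree⟩ := hC
  refine ⟨fun x => g (liftVertex C x), hleaf, fun i s hne => ?_⟩
  have hinj : Set.InjOn (Sum.map id Prod.fst) (netVertsC V C) := fun a ha b hb hab => by
    rw [← liftVertex_map_fst huniq ha, ← liftVertex_map_fst huniq hb, hab]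
  have hlevel := image_map_fst_netVertsC (V := V) huniq fun y => g y i = s
  simp only at hne ⊢
  rw [← hlevel] at hne ⊢
  exact (htree i s hne.of_image).image (hinj.mono fun _ hy => hy.1)
    fun _ => map_fst_mem_EXset

end Summary

theorem SimpleContacts.timeAssignment_summary {V : Set α} {R : α} {par : α → α} {τ : α → ℝ}
    {τmin τmax : α → EReal} {C : Set (Sym2 (α × ℝ))} (hC : SimpleContacts V R par τ C)
    (hτpar : ∀ v ∈ V, v ≠ R → τ (par v) < τ v)
    (hτ : ∀ v ∈ V, τmin v < (τ v : EReal) ∧ (τ v : EReal) < τmax v) :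
    TimeAssignment V R par τmin τmax (summary C) (Sum.elim τ (eventTime C)) := by
  obtain ⟨-, hcontact, hbefore, huniq⟩ := hC
  refine ⟨hτ, hτpar, fun v hv => ?_, fun u v huv => ?_⟩
  · obtain ⟨c, hc, hvc⟩ := mk_eventTime_mem_VCset huniq hv
    exact ⟨((hcontact c hc).2.1 _ hvc).2.2.1, hbefore _ ⟨c, hc, hvc⟩⟩
  · obtain ⟨c, hc, hcuv⟩ := huv
    have event_of_mem {w : α} (hw : w ∈ s(u, v)) : ∃ p ∈ c, eventTime C w = p.2 := by
      obtain ⟨p, hp, rfl⟩ := Sym2.mem_map.1 (hcuv ▸ hw)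
      exact ⟨p, hp, eventTime_eq_of_mem huniq ⟨c, hc, hp⟩⟩
    obtain ⟨p, hp, hu⟩ := event_of_mem (Sym2.mem_mk_left u v)
    obtain ⟨q, hq, hv⟩ := event_of_mem (Sym2.mem_mk_right u v)
    simpa only [Sum.elim_inr, hu, hv] using (hcontact c hc).2.2 p hp q hq

theorem ipstn_solution_implies_admissible_and_timeAssignment_general
    {α ι σ : Type*}
    (V : Set α) (E : Set (α × α)) (R : α) (par : α → α) (f : α → ι → σ)
    (τmin τmax : α → EReal)
    (hpar : ∀ v ∈ V, v ≠ R → (par v, v) ∈ E)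
    (X : Set (Sym2 α))
    (hsol : IsSolution V E R par f τmin τmax X) :
    Admissible V E par f X ∧
      ∃ τ : α ⊕ α → ℝ, TimeAssignment V R par τmin τmax X τ := by
  obtain ⟨-, τ, hτE, hτ, C, hsimple, hperfect, rfl⟩ := hsol
  exact ⟨hperfect.admissible_summary hsimple.2.2.2,
    _, hsimple.timeAssignment_summary (fun v hv hvR => hτE _ (hpar v hv hvR)) hτ⟩

/-- Proposition 1, left-to-right.  If `X` is a solution to the
IPSTN problem `Q`, then `X` is admissible and there is a real-valued function
`τ` on `V ∪ V_X` satisfying (a)–(d). -/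
theorem ipstn_solution_implies_admissible_and_timeAssignment
    {α ι σ : Type*} [Finite ι] [Finite σ]
    (V : Set α) (E : Set (α × α)) (R : α) (par : α → α) (f : α → ι → σ)
    (τmin τmax : α → EReal)
    (hT : IsRootedTree V E R)
    (hpar : ∀ v ∈ V, v ≠ R → (par v, v) ∈ E)
    (hint : ∀ v ∈ V, τmin v < τmax v)
    (X : Set (Sym2 α))
    (hX : ∀ e ∈ X, ¬ e.IsDiag ∧ ∀ v ∈ e, v ∈ V ∧ v ≠ R)
    (hsol : IsSolution V E R par f τmin τmax X) :
    Admissible V E par f X ∧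
      ∃ τ : α ⊕ α → ℝ, TimeAssignment V R par τmin τmax X τ :=
  ipstn_solution_implies_admissible_and_timeAssignment_general V E R par f τmin τmax hpar X hsol

end Phylo
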